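/- With K and ε defined as the quotient construction (K(b) = T(b)/∼ with ε_a(x) = [(x, id_{F(a)})]), the pair (K, ε) satisfies the universal property of the left Kan extension: for any functor K' : B → Set and natural transformation ε' : X ⟹ K' ∘ F there is a unique natural transformation α : K ⟹ K' with ε' = (αF) ∘ ε, namely α_b[(x, p)] = K'(p)(ε'_a(x)). -/

import Mathlib

open CategoryTheory

/-- The generating relation on `⨆ₐ X(a) × Hom_B(F(a), b)`:
`(x, F(f) ≫ p) ∼ (X(f)(x), p)` for `f : a ⟶ a'` and `p : F(a') ⟶ b`. -/
def KanRel {A B : Type} [SmallCategory A] [SmallCategory B]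
    (F : A ⥤ B) (X : A ⥤ Type) (b : B)
    (t t' : Σ a : A, X.obj a × (F.obj a ⟶ b)) : Prop :=
  ∃ f : t.1 ⟶ t'.1, t'.2.1 = X.map f t.2.1 ∧ t.2.2 = F.map f ≫ t'.2.2

/-- The quotient construction `K : B ⥤ Type`, `K(b) = T(b)/∼`, acting on
morphisms by post-composition in the second coordinate. -/
def KanExt {A B : Type} [SmallCategory A] [SmallCategory B]
    (F : A ⥤ B) (X : A ⥤ Type) : B ⥤ Type where
  obj b := Quot (KanRel F X b)
  map {b b'} q :=
    TypeCat.ofHom (Quot.lift (fun t => Quot.mk (KanRel F X b') ⟨t.1, t.2.1, t.2.2 ≫ q⟩)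
      (by
        rintro t t' ⟨f, hx, hp⟩
        apply Quot.sound
        exact ⟨f, hx, by simp [hp]⟩))
  map_id b := by
    ext x
    induction x using Quot.ind
    simp
  map_comp q q' := by
    ext x
    induction x using Quot.ind
    simp

/-- The unit `ε_a : X(a) → K(F(a))`, `x ↦ [(x, id_{F(a)})]`. -/
def KanUnit {A B : Type} [SmallCategory A] [SmallCategory B]
    (F : A ⥤ B) (X : A ⥤ Type) : X ⟶ F ⋙ KanExt F X where
  app a := TypeCat.ofHom (fun x => Quot.mk (KanRel F X (F.obj a)) ⟨a, x, 𝟙 (F.obj a)⟩)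
  naturality a a' f := by
    ext x
    exact (Quot.sound ⟨f, rfl, by simp⟩).symm

/-! Every class `[(x, p)]` with `x : X(a)`, `p : F(a) ⟶ b` is the image `K(p)(ε_a(x))` of a unit
element. Hence a factorization `α` is forced to be `α_b [(x, p)] = K'(p)(ε'_a(x))`, and this
formula respects `∼` precisely because `ε'` is natural. -/

namespace KanExt

variable {A B : Type} [SmallCategory A] [SmallCategory B] {F : A ⥤ B} {X : A ⥤ Type}

lemma mk_eq_map_kanUnit {b : B} (t : Σ a : A, X.obj a × (F.obj a ⟶ b)) :
    Quot.mk (KanRel F X b) t = (KanExt F X).map t.2.2 ((KanUnit F X).app t.1 t.2.1) := by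
  change _ = Quot.mk (KanRel F X b) ⟨t.1, t.2.1, 𝟙 _ ≫ t.2.2⟩
  rw [Category.id_comp]

variable {K' : B ⥤ Type} (ε' : X ⟶ F ⋙ K')

lemma desc_respects {b : B} {t t' : Σ a : A, X.obj a × (F.obj a ⟶ b)} (h : KanRel F X b t t') :
    K'.map t.2.2 (ε'.app t.1 t.2.1) = K'.map t'.2.2 (ε'.app t'.1 t'.2.1) := by
  obtain ⟨f, hx, hp⟩ := h
  rw [hx, hp, NatTrans.naturality_apply, Functor.comp_map, Functor.map_comp_apply]

def desc : KanExt F X ⟶ K' where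
  app b := TypeCat.ofHom (Quot.lift (fun t => K'.map t.2.2 (ε'.app t.1 t.2.1))
    fun _ _ => desc_respects ε')
  naturality b b' q := by
    ext t
    induction t using Quot.ind
    exact K'.map_comp_apply _ _ _

lemma kanUnit_comp_whiskerLeft_desc : KanUnit F X ≫ Functor.whiskerLeft F (desc ε') = ε' := by
  ext a x
  exact K'.map_id_apply _ _

variable {ε'}

lemma app_mk_of_factorization {α : KanExt F X ⟶ K'}
    (h : ε' = KanUnit F X ≫ Functor.whiskerLeft F α) {b : B}
    (t : Σ a : A, X.obj a × (F.obj a ⟶ b)) :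
    α.app b (Quot.mk _ t) = K'.map t.2.2 (ε'.app t.1 t.2.1) := by
  rw [mk_eq_map_kanUnit, NatTrans.naturality_apply, h]
  rfl

lemma eq_desc_of_factorization {α : KanExt F X ⟶ K'}
    (h : ε' = KanUnit F X ≫ Functor.whiskerLeft F α) : α = desc ε' := by
  ext b t
  induction t using Quot.ind
  exact app_mk_of_factorization h _

end KanExt

/-- The quotient construction `(K, ε)` satisfies the universal property of the
left Kan extension: every `(K', ε')` factors through it via a unique natural
transformation `α`, and the unique `α` is given by
`α_b [(x, p)] = K'(p)(ε'_a(x))`. -/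
theorem kanExt_universal_property {A B : Type}
    [SmallCategory A] [SmallCategory B] (F : A ⥤ B) (X : A ⥤ Type)
    (K' : B ⥤ Type) (ε' : X ⟶ F ⋙ K') :
    (∃! α : KanExt F X ⟶ K', ε' = KanUnit F X ≫ Functor.whiskerLeft F α) ∧
    (∀ α : KanExt F X ⟶ K', ε' = KanUnit F X ≫ Functor.whiskerLeft F α →
      ∀ (b : B) (t : Σ a : A, X.obj a × (F.obj a ⟶ b)),
        α.app b (Quot.mk (KanRel F X b) t) = K'.map t.2.2 (ε'.app t.1 t.2.1)) :=
  ⟨⟨KanExt.desc ε', (KanExt.kanUnit_comp_whiskerLeft_desc ε').symm,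
      fun _ => KanExt.eq_desc_of_factorization⟩,
    fun _ h _ => KanExt.app_mk_of_factorization h⟩
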